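/- Let G be a locally compact Hausdorff group, H a closed subgroup, Y a locally compact Hausdorff proper H-space, and β a strongly continuous action of G by *-automorphisms on a C*-algebra B. Then the map Φ: C₀((G×_H Y)×_G B) → C₀(Y×_H B) defined by Φ(F)(y) = F([e,y]) is a *-isomorphism, with inverse given by Φ⁻¹(F)([g,y]) = β_g(F(y)). -/

import Mathlib

/-- A continuous action of `G` on `X` is *proper* if the map
`G × X → X × X, (g,x) ↦ (g • x, x)` is proper, i.e. preimages of compact sets
are compact. -/
def ProperAction (G X : Type*) [SMul G X] [TopologicalSpace G]
    [TopologicalSpace X] : Prop :=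
  ∀ K : Set (X × X), IsCompact K →
    IsCompact ((fun p : G × X => (p.1 • p.2, p.2)) ⁻¹' K)

/-- The setoid on `G × Y` whose quotient is the induced space `G ×_H Y`:
`(g, y) ∼ (g * h⁻¹, h • y)` for `h ∈ H`. -/
def indSetoid (G : Type*) [Group G] (H : Subgroup G) (Y : Type*)
    [MulAction (↥H) Y] : Setoid (G × Y) where
  r p q := ∃ h : ↥H, q.1 = p.1 * (h : G)⁻¹ ∧ q.2 = h • p.2
  iseqv := by
    constructor
    · intro p
      exact ⟨1, by simp, by simp⟩
    · rintro p q ⟨h, h1, h2⟩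
      refine ⟨h⁻¹, by simp [h1], by simp [h2]⟩
    · rintro p q r ⟨h, h1, h2⟩ ⟨k, k1, k2⟩
      refine ⟨k * h, by simp [k1, h1, mul_assoc], by simp [k2, h2, mul_smul]⟩

/-- The induced `G`-space `G ×_H Y`, endowed with the quotient topology. -/
abbrev IndSpace (G : Type*) [Group G] [TopologicalSpace G] (H : Subgroup G)
    (Y : Type*) [TopologicalSpace Y] [MulAction (↥H) Y] : Type _ :=
  Quotient (indSetoid G H Y)

/-- `G` acts on `G ×_H Y` by left translation in the first coordinate. -/
instance IndSpace.instMulAction (G : Type*) [Group G] [TopologicalSpace G]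
    (H : Subgroup G) (Y : Type*) [TopologicalSpace Y] [MulAction (↥H) Y] :
    MulAction G (IndSpace G H Y) where
  smul g q := Quotient.liftOn q
    (fun p => Quotient.mk (indSetoid G H Y) (g * p.1, p.2))
    (by
      rintro p q ⟨h, h1, h2⟩
      exact Quotient.sound ⟨h, by rw [h1, mul_assoc], h2⟩)
  one_smul q := by
    refine Quotient.inductionOn q ?_
    intro p
    show Quotient.mk (indSetoid G H Y) (1 * p.1, p.2) = Quotient.mk _ p
    rw [one_mul]
  mul_smul g g' q := by
    refine Quotient.inductionOn q ?_
    intro p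
    show Quotient.mk (indSetoid G H Y) (g * g' * p.1, p.2)
      = Quotient.mk (indSetoid G H Y) (g * (g' * p.1), p.2)
    rw [mul_assoc]

/-- The generalized fixed-point algebra `C₀(X ×_Γ B)`:  bounded continuous
functions `F : X → B` with `F (g • x) = g • F x`, such that the induced
function `‖F(·)‖` on the orbit space vanishes at infinity. -/
def IndAlg (Γ X B : Type*) [Group Γ] [TopologicalSpace X] [MulAction Γ X]
    [SMul Γ B] [TopologicalSpace B] [Norm B] : Set (X → B) :=
  {F | Continuous F ∧ (∀ (g : Γ) (x : X), F (g • x) = g • F x) ∧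
    (∃ C : ℝ, ∀ x : X, ‖F x‖ ≤ C) ∧
    ∀ ε : ℝ, 0 < ε → ∃ K : Set (Quotient (MulAction.orbitRel Γ X)), IsCompact K ∧
      ∀ x : X, Quotient.mk (MulAction.orbitRel Γ X) x ∉ K → ‖F x‖ < ε}


/-!
Every `G`-equivariant function on `G ×_H Y` is determined by its values on the slice
`{[e, y]}`, because `[g, y] = g • [e, y]`; conversely an `H`-equivariant `f` on `Y` extends to
`[g, y] ↦ β_g (f y)`, which is well defined precisely because of `H`-equivariance. The action `β`
is by `*`-automorphisms of a C*-algebra, hence isometric, so norms are unchanged by the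
extension; together with the continuous maps `[[g, y]] ↦ [y]` and `[y] ↦ [[e, y]]` between the
orbit spaces this transfers vanishing at infinity in both directions. Continuity of the
extension comes from the fact that a strongly continuous isometric action is jointly continuous.
-/

open Filter Topology MulAction

theorem norm_smul_eq_of_smul_star {G B : Type*} [Group G] [CStarAlgebra B]
    [MulSemiringAction G B] [SMulCommClass G ℂ B]
    (hstar : ∀ (g : G) (b : B), g • star b = star (g • b)) (g : G) (b : B) :
    ‖g • b‖ = ‖b‖ :=
  StarAlgEquiv.norm_map (StarAlgEquiv.ofAlgEquiv (MulSemiringAction.toAlgEquiv ℂ B g) (hstar g)) b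

theorem continuousSMul_of_norm_smul_eq {G B : Type*} [Monoid G] [TopologicalSpace G]
    [SeminormedAddCommGroup B] [DistribMulAction G B]
    (hnorm : ∀ (g : G) (b : B), ‖g • b‖ = ‖b‖) (hcont : ∀ b : B, Continuous fun g : G => g • b) :
    ContinuousSMul G B := by
  refine ⟨continuous_iff_continuousAt.2 fun ⟨g₀, b₀⟩ => ?_⟩
  have hsplit : ∀ p : G × B, p.1 • p.2 = p.1 • (p.2 - b₀) + p.1 • b₀ := fun p => by
    rw [smul_sub, sub_add_cancel]
  have hsmall : Tendsto (fun p : G × B => p.1 • (p.2 - b₀)) (𝓝 (g₀, b₀)) (𝓝 0) := by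
    rw [tendsto_zero_iff_norm_tendsto_zero]
    simp only [hnorm]
    simpa using ((continuous_snd.sub continuous_const).norm.tendsto (g₀, b₀) :
      Tendsto (fun p : G × B => ‖p.2 - b₀‖) _ _)
  have horbit : Tendsto (fun p : G × B => p.1 • b₀) (𝓝 (g₀, b₀)) (𝓝 (g₀ • b₀)) :=
    ((hcont b₀).comp continuous_fst).tendsto _
  simpa [ContinuousAt, hsplit] using hsmall.add horbit

/-- The last condition in `IndAlg Γ X B` is `VanishesAtInftyAlong (Quotient.mk (orbitRel Γ X)) F`. -/
def VanishesAtInftyAlong {X Q B : Type*} [TopologicalSpace Q] [Norm B] (q : X → Q) (F : X → B) :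
    Prop :=
  ∀ ε : ℝ, 0 < ε → ∃ K : Set Q, IsCompact K ∧ ∀ x, q x ∉ K → ‖F x‖ < ε

theorem VanishesAtInftyAlong.of_norm_le {X X' Q Q' B B' : Type*} [TopologicalSpace Q]
    [TopologicalSpace Q'] [Norm B] [Norm B'] {q : X → Q} {F : X → B}
    (hF : VanishesAtInftyAlong q F) {q' : X' → Q'} {F' : X' → B'} {s : Q → Q'}
    (hs : Continuous s) (hle : ∀ x', ∃ x, s (q x) = q' x' ∧ ‖F' x'‖ ≤ ‖F x‖) :
    VanishesAtInftyAlong q' F' := by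
  intro ε hε
  obtain ⟨K, hK, hFK⟩ := hF ε hε
  refine ⟨s '' K, hK.image hs, fun x' hx' => ?_⟩
  obtain ⟨x, hsx, hFx⟩ := hle x'
  exact hFx.trans_lt (hFK x fun hx => hx' ⟨q x, hx, hsx⟩)

namespace IndSpace

variable {G : Type*} [Group G] [TopologicalSpace G] (H : Subgroup G)
  {Y : Type*} [TopologicalSpace Y] [MulAction H Y]

abbrev mk (g : G) (y : Y) : IndSpace G H Y := Quotient.mk (indSetoid G H Y) (g, y)

variable {H}

theorem smul_mk (g g' : G) (y : Y) : g • mk H g' y = mk H (g * g') y := rfl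

theorem mk_eq_smul_mk_one (g : G) (y : Y) : mk H g y = g • mk H 1 y := by
  rw [smul_mk, mul_one]

theorem mk_one_smul (h : H) (y : Y) : mk H 1 (h • y) = (h : G) • mk H 1 y := by
  rw [smul_mk, mul_one]
  exact Quotient.sound ⟨h⁻¹, by simp, by simp⟩

theorem continuous_mk_one : Continuous (mk H 1 : Y → IndSpace G H Y) :=
  continuous_quotient_mk'.comp (Continuous.prodMk_right 1)

def orbitProj : Quotient (orbitRel G (IndSpace G H Y)) → Quotient (orbitRel H Y) :=
  Quotient.lift
    (Quotient.lift (fun p : G × Y => Quotient.mk (orbitRel H Y) p.2)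
      fun p _ ⟨h, _, hy⟩ => (Quotient.sound (hy ▸ mem_orbit p.2 h : _ ∈ orbit H p.2)).symm)
    fun _ x ⟨_, hg⟩ => hg ▸ Quotient.inductionOn x fun _ => rfl

theorem continuous_orbitProj : Continuous (orbitProj : _ → Quotient (orbitRel H Y)) :=
  (continuous_quotient_mk'.comp continuous_snd).quotient_lift _ |>.quotient_lift _

def orbitIncl : Quotient (orbitRel H Y) → Quotient (orbitRel G (IndSpace G H Y)) :=
  Quotient.lift (fun y => Quotient.mk _ (mk H 1 y))
    fun _ y ⟨h, hy⟩ => Quotient.sound ⟨(h : G), hy ▸ (mk_one_smul h y).symm⟩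

theorem continuous_orbitIncl :
    Continuous (orbitIncl : Quotient (orbitRel H Y) → Quotient (orbitRel G (IndSpace G H Y))) :=
  (continuous_quotient_mk'.comp continuous_mk_one).quotient_lift _

theorem orbitIncl_mk (g : G) (y : Y) :
    orbitIncl (Quotient.mk (orbitRel H Y) y) = Quotient.mk _ (mk H g y) :=
  Quotient.sound ⟨g⁻¹, show g⁻¹ • mk H g y = mk H 1 y by rw [smul_mk, inv_mul_cancel]⟩

variable {B : Type*}

theorem apply_mk_eq_smul [MulAction G B] {F : IndSpace G H Y → B}
    (hF : ∀ (g : G) x, F (g • x) = g • F x) (g : G) (y : Y) :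
    F (mk H g y) = g • F (mk H 1 y) := by
  rw [mk_eq_smul_mk_one, hF]

theorem eq_of_apply_mk_one_eq [MulAction G B] {F F' : IndSpace G H Y → B}
    (hF : ∀ (g : G) x, F (g • x) = g • F x) (hF' : ∀ (g : G) x, F' (g • x) = g • F' x)
    (h : ∀ y, F (mk H 1 y) = F' (mk H 1 y)) : F = F' := by
  funext x
  induction x using Quotient.inductionOn with
  | h p => rw [apply_mk_eq_smul hF p.1 p.2, apply_mk_eq_smul hF' p.1 p.2, h]

theorem restrict_mem_indAlg [TopologicalSpace B] [Norm B] [MulAction G B]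
    {F : IndSpace G H Y → B} (hF : F ∈ IndAlg G (IndSpace G H Y) B) :
    (fun y => F (mk H 1 y)) ∈ IndAlg H Y B := by
  obtain ⟨hcont, hequiv, ⟨C, hC⟩, hvanish⟩ := hF
  refine ⟨hcont.comp continuous_mk_one, fun h y => ?_, ⟨C, fun y => hC _⟩, ?_⟩
  · show F (mk H 1 (h • y)) = (h : G) • F (mk H 1 y)
    rw [mk_one_smul, hequiv]
  · exact VanishesAtInftyAlong.of_norm_le hvanish continuous_orbitProj
      fun y => ⟨mk H 1 y, rfl, le_rfl⟩

def extend [MulAction G B] (f : Y → B) (hf : ∀ (h : H) y, f (h • y) = h • f y) :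
    IndSpace G H Y → B :=
  Quotient.lift (fun p : G × Y => p.1 • f p.2) fun p _ ⟨h, hg, hy⟩ => by
    rw [hg, hy, hf, Subgroup.smul_def, ← mul_smul, inv_mul_cancel_right]

theorem extend_mem_indAlg [SeminormedAddCommGroup B] [DistribMulAction G B] [ContinuousSMul G B]
    (hnorm : ∀ (g : G) (b : B), ‖g • b‖ = ‖b‖) {f : Y → B} (hf : f ∈ IndAlg H Y B) :
    extend f hf.2.1 ∈ IndAlg G (IndSpace G H Y) B := by
  obtain ⟨hcont, -, ⟨C, hC⟩, hvanish⟩ := id hf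
  have hnorm_extend : ∀ g y, ‖extend f hf.2.1 (mk H g y)‖ = ‖f y‖ := fun g y => hnorm g (f y)
  refine ⟨(continuous_fst.smul (hcont.comp continuous_snd)).quotient_lift _,
    fun g x => Quotient.inductionOn x fun p => mul_smul g p.1 (f p.2),
    ⟨C, fun x => Quotient.inductionOn x fun p => (hnorm_extend p.1 p.2).trans_le (hC p.2)⟩, ?_⟩
  refine VanishesAtInftyAlong.of_norm_le hvanish continuous_orbitIncl fun x => ?_
  induction x using Quotient.inductionOn with
  | h p => exact ⟨p.2, orbitIncl_mk p.1 p.2, (hnorm_extend p.1 p.2).le⟩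

end IndSpace

theorem indAlg_iso_of_induced_space_general
    (G : Type*) [Group G] [TopologicalSpace G]
    (H : Subgroup G)
    (Y : Type*) [TopologicalSpace Y]
    [MulAction (↥H) Y]
    (B : Type*) [NormedRing B] [StarRing B] [CStarRing B] [NormedAlgebra ℂ B]
    [StarModule ℂ B] [CompleteSpace B]
    [MulSemiringAction G B] [SMulCommClass G ℂ B]
    (hstar : ∀ (g : G) (b : B), g • (star b) = star (g • b))
    (hcont : ∀ b : B, Continuous fun g : G => g • b) :
    Set.BijOn
      (fun F : IndSpace G H Y → B =>
        fun y : Y => F (Quotient.mk (indSetoid G H Y) (1, y)))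
      (IndAlg G (IndSpace G H Y) B) (IndAlg (↥H) Y B) ∧
    ∀ F ∈ IndAlg G (IndSpace G H Y) B, ∀ (g : G) (y : Y),
      F (Quotient.mk (indSetoid G H Y) (g, y))
        = g • F (Quotient.mk (indSetoid G H Y) (1, y)) := by
  let _ : CStarAlgebra B := {}
  have hnorm : ∀ (g : G) (b : B), ‖g • b‖ = ‖b‖ := norm_smul_eq_of_smul_star hstar
  have : ContinuousSMul G B := continuousSMul_of_norm_smul_eq hnorm hcont
  refine ⟨⟨fun F => IndSpace.restrict_mem_indAlg, ?_, ?_⟩,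
    fun F hF => IndSpace.apply_mk_eq_smul hF.2.1⟩
  · exact fun F hF F' hF' hEq => IndSpace.eq_of_apply_mk_one_eq hF.2.1 hF'.2.1 (congrFun hEq)
  · exact fun f hf => ⟨IndSpace.extend f hf.2.1, IndSpace.extend_mem_indAlg hnorm hf,
      funext fun y => one_smul G (f y)⟩

/-- Let `G` be a locally compact Hausdorff group, `H` a closed subgroup, `Y`
a locally compact Hausdorff proper `H`-space, and `β` a strongly continuous
action of `G` by `*`-automorphisms on a C*-algebra `B`.  Then the map
`Φ : C₀((G ×_H Y) ×_G B) → C₀(Y ×_H B)` defined by `Φ(F)(y) = F([e, y])` is a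
`*`-isomorphism (a bijection between the two generalized fixed-point
algebras; the operations are pointwise, so it is automatically a
`*`-homomorphism), with inverse given by `Φ⁻¹(F)([g, y]) = β_g (F y)`, i.e.
every `F ∈ C₀((G ×_H Y) ×_G B)` satisfies `F([g, y]) = β_g (F([e, y]))`. -/
theorem indAlg_iso_of_induced_space
    (G : Type*) [Group G] [TopologicalSpace G] [IsTopologicalGroup G]
    [LocallyCompactSpace G] [T2Space G]
    (H : Subgroup G) (hH : IsClosed (H : Set G))
    (Y : Type*) [TopologicalSpace Y] [LocallyCompactSpace Y] [T2Space Y]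
    [MulAction (↥H) Y] [ContinuousSMul (↥H) Y] (hYproper : ProperAction (↥H) Y)
    (B : Type*) [NormedRing B] [StarRing B] [CStarRing B] [NormedAlgebra ℂ B]
    [StarModule ℂ B] [CompleteSpace B]
    [MulSemiringAction G B] [SMulCommClass G ℂ B]
    (hstar : ∀ (g : G) (b : B), g • (star b) = star (g • b))
    (hcont : ∀ b : B, Continuous fun g : G => g • b) :
    Set.BijOn
      (fun F : IndSpace G H Y → B =>
        fun y : Y => F (Quotient.mk (indSetoid G H Y) (1, y)))
      (IndAlg G (IndSpace G H Y) B) (IndAlg (↥H) Y B) ∧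
    ∀ F ∈ IndAlg G (IndSpace G H Y) B, ∀ (g : G) (y : Y),
      F (Quotient.mk (indSetoid G H Y) (g, y))
        = g • F (Quotient.mk (indSetoid G H Y) (1, y)) :=
  indAlg_iso_of_induced_space_general G H Y B hstar hcont
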